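/- Let p be a prime and k a field of characteristic p. In the adjoint action of GL(p,k) on gl(p,k) (p×p matrices, by conjugation), the fixed subspace is the line k·Id of scalar matrices, and this line admits no GL(p)-stable (equivalently, no conjugation-stable) linear complement in gl(p,k). -/

import Mathlib

/-!
Conjugation fixes `1`, so a conjugation-stable complement `W` of `k ∙ 1` contains
`g A g⁻¹ - A` for every matrix `A`. The diagonal matrix units `Eᵢᵢ` are conjugate to each
other by permutation matrices, hence all congruent modulo `W`, and so
`1 = ∑ᵢ Eᵢᵢ ≡ p • E₀₀ = 0` modulo `W`: the line `k ∙ 1` would lie in `W`.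
-/

open Matrix

section Complement

variable {k M : Type*} [Ring k] [AddCommGroup M] [Module k M]

lemma Submodule.map_sub_self_mem_of_codisjoint_span {v : M} {W : Submodule k M}
    (hW : Codisjoint (span k {v}) W) {f : M →ₗ[k] M} (hfv : f v = v)
    (hfW : ∀ w ∈ W, f w ∈ W) (x : M) : f x - x ∈ W := by
  obtain ⟨s, hs, w, hw, rfl⟩ := mem_sup.mp (hW.eq_top ▸ mem_top : x ∈ span k {v} ⊔ W)
  obtain ⟨c, rfl⟩ := mem_span_singleton.mp hs
  have : f (c • v + w) - (c • v + w) = f w - w := by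
    rw [map_add, map_smul, hfv]; abel
  exact this ▸ sub_mem (hfW w hw) hw

lemma Submodule.sum_mem_of_sub_mem {ι : Type*} [Fintype ι] (W : Submodule k M) (x : ι → M)
    (hx : ∀ i j, x i - x j ∈ W) (hcard : (Fintype.card ι : k) = 0) : ∑ i, x i ∈ W := by
  cases isEmpty_or_nonempty ι with
  | inl _ => simp
  | inr h =>
    obtain ⟨i₀⟩ := h
    have hsplit : ∑ i, x i = ∑ i, (x i - x i₀) + (Fintype.card ι : k) • x i₀ := by
      rw [Nat.cast_smul_eq_nsmul, Finset.sum_sub_distrib, Finset.sum_const, Finset.card_univ,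
        sub_add_cancel]
    rw [hsplit, hcard, zero_smul, add_zero]
    exact sum_mem fun i _ => hx i i₀

end Complement

namespace Matrix

variable {n R : Type*} [Fintype n] [DecidableEq n] [CommRing R]

lemma setOf_forall_conj_eq_self :
    {A : Matrix n n R | ∀ g : GL n R, (g : Matrix n n R) * A * (↑g⁻¹ : Matrix n n R) = A} =
      Set.range (fun c : R => c • (1 : Matrix n n R)) := by
  ext A
  simp only [Set.mem_ofPred_eq, Units.mul_inv_eq_iff_eq_mul, Set.mem_range,
    smul_one_eq_diagonal, ← scalar_apply]
  constructor
  · intro hA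
    exact mem_range_scalar_of_commute_transvectionStruct fun t =>
      hA ⟨t.toMatrix, t.inv.toMatrix, t.mul_inv, t.inv_mul⟩
  · rintro ⟨c, rfl⟩ g
    exact (scalar_commute c (Commute.all c) (g : Matrix n n R)).symm

lemma exists_conj_single_eq (i j : n) (r : R) :
    ∃ g : GL n R,
      (g : Matrix n n R) * single i i r * (↑g⁻¹ : Matrix n n R) = single j j r := by
  refine ⟨(permMatrixHom (R := R)).toHomUnits (Equiv.swap i j), ?_⟩
  rw [← map_inv]
  simp only [MonoidHom.coe_toHomUnits, permMatrixHom_apply, inv_inv]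
  rw [PEquiv.toMatrix_toPEquiv_mul, PEquiv.mul_toMatrix_toPEquiv]
  simp

end Matrix

/-- In characteristic `p`, for the adjoint (conjugation) action of `GL(p,k)` on
`gl(p,k)`, the fixed subspace is the line of scalar matrices `k·Id`, and this line
admits no conjugation-stable linear complement. -/
theorem stmt9 (p : ℕ) (hp : p.Prime) (k : Type*) [Field k] [CharP k p] :
    ({A : Matrix (Fin p) (Fin p) k |
        ∀ g : GL (Fin p) k, (g : Matrix (Fin p) (Fin p) k) * A * (↑g⁻¹ : Matrix (Fin p) (Fin p) k) = A}
      = Set.range (fun c : k => c • (1 : Matrix (Fin p) (Fin p) k))) ∧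
    ¬ ∃ W : Submodule k (Matrix (Fin p) (Fin p) k),
        IsCompl (Submodule.span k {(1 : Matrix (Fin p) (Fin p) k)}) W ∧
        ∀ g : GL (Fin p) k, ∀ A ∈ W,
          (g : Matrix (Fin p) (Fin p) k) * A * (↑g⁻¹ : Matrix (Fin p) (Fin p) k) ∈ W := by
  refine ⟨setOf_forall_conj_eq_self, ?_⟩
  rintro ⟨W, hcompl, hstab⟩
  have hconj (g : GL (Fin p) k) (A : Matrix (Fin p) (Fin p) k) :
      (g : Matrix (Fin p) (Fin p) k) * A * (↑g⁻¹ : Matrix (Fin p) (Fin p) k) - A ∈ W :=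
    Submodule.map_sub_self_mem_of_codisjoint_span hcompl.codisjoint
      (f := LinearMap.mulLeftRight k ((g : Matrix (Fin p) (Fin p) k), ↑g⁻¹)) (by simp)
      (hstab g) A
  have hone : (1 : Matrix (Fin p) (Fin p) k) ∈ W := by
    rw [← sum_single_one]
    refine W.sum_mem_of_sub_mem _ (fun i j => ?_) (by simp)
    obtain ⟨g, hg⟩ := exists_conj_single_eq j i (1 : k)
    simpa only [hg] using hconj g (single j j 1)
  have : NeZero p := ⟨hp.ne_zero⟩
  exact one_ne_zero <| Submodule.disjoint_def.mp hcompl.disjoint _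
    (Submodule.mem_span_singleton_self _) hone
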